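/- Let f be entire with sup over z ∈ ℂ of |f'(z)|·exp(−ψ_m(z))/(1 + ψ_m'(|z|)) =: M < ∞. Then there is a constant C depending only on m such that |f(z) − f(0)| ≤ C·M·exp(ψ_m(z)) for all z ∈ ℂ; in particular f belongs to the growth Fock–Sobolev space F^∞_{ψ_m}. -/

import Mathlib

/-- The weight function ψ_m(z) = |z|²/2 − m·log(1+|z|). -/
noncomputable def psi (m : ℕ) (z : ℂ) : ℝ :=
  ‖z‖ ^ 2 / 2 - m * Real.log (1 + ‖z‖)

/-- ψ_m'(r) = r − m/(1+r). -/
noncomputable def psi' (m : ℕ) (r : ℝ) : ℝ := r - m / (1 + r)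

/-!
The hypothesis bounds `|f'(w)|` by `M (1 + ψ'(|w|)) e^{ψ(w)}` only where `1 + ψ'(|w|) > 0`
(elsewhere the quotient is nonpositive, or `0` by the convention `x / 0 = 0`). On `|w| ≥ √(m+1)`
one has `ψ' ≥ 1`, so this is at most `2 M ψ' e^ψ`; inside that disc the maximum modulus principle
bounds `|f'|` by its values on the circle. Hence `|f'(w)| ≤ M G'(|w|)` with
`G(s) = K s + 2 e^{ψ(s)}`, and comparing `f` with `G` along the segment `[0, z]` gives
`|f(z) - f(0)| ≤ M (G(|z|) - G(0)) ≤ C M e^{ψ(z)}`, because `s ≤ e^{(m+1)²/2} e^{ψ(s)}`.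
-/

open Real Set

noncomputable def psiRadial (m : ℕ) (s : ℝ) : ℝ := s ^ 2 / 2 - m * log (1 + s)

lemma psi_eq_psiRadial (m : ℕ) (z : ℂ) : psi m z = psiRadial m ‖z‖ := rfl

lemma hasDerivAt_psiRadial (m : ℕ) {s : ℝ} (hs : -1 < s) :
    HasDerivAt (psiRadial m) (psi' m s) s := by
  have hlog : HasDerivAt (fun x : ℝ => log (1 + x)) (1 / (1 + s)) s := by
    simpa using ((hasDerivAt_id' s).const_add 1).log (by linarith)
  refine (((hasDerivAt_pow 2 s).div_const 2).sub (hlog.const_mul (m : ℝ))).congr_deriv ?_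
  simp only [psi']
  ring

lemma psiRadial_le (m : ℕ) {s : ℝ} (hs : 0 ≤ s) : psiRadial m s ≤ s ^ 2 / 2 := by
  have : 0 ≤ (m : ℝ) * log (1 + s) := by
    have := log_nonneg (by linarith : (1 : ℝ) ≤ 1 + s)
    positivity
  simp only [psiRadial]
  linarith

lemma sq_div_two_sub_mul_le_psiRadial (m : ℕ) {s : ℝ} (hs : 0 ≤ s) :
    s ^ 2 / 2 - m * s ≤ psiRadial m s := by
  have : log (1 + s) ≤ s := by linarith [log_le_sub_one_of_pos (by linarith : (0 : ℝ) < 1 + s)]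
  simp only [psiRadial]
  nlinarith [Nat.cast_nonneg (α := ℝ) m]

lemma le_exp_mul_exp_psiRadial (m : ℕ) {s : ℝ} (hs : 0 ≤ s) :
    s ≤ exp ((m + 1) ^ 2 / 2) * exp (psiRadial m s) := by
  have := sq_div_two_sub_mul_le_psiRadial m hs
  calc s ≤ exp s := by linarith [add_one_le_exp s]
    _ ≤ exp ((m + 1) ^ 2 / 2 + psiRadial m s) :=
        exp_le_exp.2 (by nlinarith [sq_nonneg (s - m - 1)])
    _ = _ := exp_add _ _

lemma neg_psi_le (m : ℕ) (z : ℂ) : -psi m z ≤ m ^ 2 / 2 := by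
  have := sq_div_two_sub_mul_le_psiRadial m (norm_nonneg z)
  rw [psi_eq_psiRadial]
  nlinarith [sq_nonneg (‖z‖ - m)]

lemma neg_le_psi' (m : ℕ) {s : ℝ} (hs : 0 ≤ s) : -(m : ℝ) ≤ psi' m s := by
  have : (m : ℝ) / (1 + s) ≤ m := div_le_self (Nat.cast_nonneg m) (by linarith)
  simp only [psi']
  linarith

lemma psi'_le (m : ℕ) {s : ℝ} (hs : 0 ≤ s) : psi' m s ≤ s := by
  have : 0 ≤ (m : ℝ) / (1 + s) := by positivity
  simp only [psi']
  linarith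

lemma one_le_psi' (m : ℕ) {s : ℝ} (hs : 0 ≤ s) (hms : m + 1 ≤ s ^ 2) : 1 ≤ psi' m s := by
  have : (m : ℝ) / (1 + s) ≤ s - 1 := by
    rw [div_le_iff₀ (by linarith)]
    nlinarith
  simp only [psi']
  linarith

theorem norm_sub_le_of_norm_deriv_le_radial {E : Type*} [NormedAddCommGroup E]
    [NormedSpace ℂ E] {f : ℂ → E} (hf : Differentiable ℂ f) {G G' : ℝ → ℝ}
    (hG : ∀ s, 0 ≤ s → HasDerivAt G (G' s) s) (hbound : ∀ w, ‖deriv f w‖ ≤ G' ‖w‖)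
    (z : ℂ) : ‖f z - f 0‖ ≤ G ‖z‖ - G 0 := by
  have hnorm : ∀ t : ℝ, 0 ≤ t → ‖(t : ℂ) * z‖ = t * ‖z‖ := fun t ht => by
    rw [norm_mul, Complex.norm_real, Real.norm_of_nonneg ht]
  have hg : ∀ t : ℝ, HasDerivAt (fun t : ℝ => f (t * z) - f 0) (z • deriv f (t * z)) t :=
    fun t => (((hf _).hasDerivAt.scomp t
      ((Complex.ofRealCLM.hasDerivAt (x := t)).mul_const z)).sub_const (f 0)).congr_deriv
      (by simp)
  have hB : ∀ t ∈ Icc (0 : ℝ) 1,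
      HasDerivAt (fun t => G (t * ‖z‖) - G 0) (G' (t * ‖z‖) * ‖z‖) t := fun t ht =>
    ((hG _ (mul_nonneg ht.1 (norm_nonneg z))).comp t
      ((hasDerivAt_id t).mul_const ‖z‖) |>.sub_const (G 0)).congr_deriv (by simp)
  have := image_norm_le_of_norm_deriv_right_le_deriv_boundary'
    (fun t _ => (hg t).continuousAt.continuousWithinAt) (fun t _ => (hg t).hasDerivWithinAt)
    (by simp) (fun t ht => (hB t ht).continuousAt.continuousWithinAt)
    (fun t ht => (hB t (Ico_subset_Icc_self ht)).hasDerivWithinAt)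
    (fun t ht => by
      rw [norm_smul, mul_comm, ← hnorm t ht.1]
      exact mul_le_mul_of_nonneg_right (hbound _) (norm_nonneg z))
    (right_mem_Icc.2 zero_le_one)
  simpa using this

theorem norm_le_of_forall_norm_eq_le {E : Type*} [NormedAddCommGroup E] [NormedSpace ℂ E]
    {g : ℂ → E} (hg : Differentiable ℂ g) {R A : ℝ} (hR : 0 < R)
    (hA : ∀ ζ : ℂ, ‖ζ‖ = R → ‖g ζ‖ ≤ A) {w : ℂ} (hw : ‖w‖ ≤ R) : ‖g w‖ ≤ A := by
  refine Complex.norm_le_of_forall_mem_frontier_norm_le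
    (Metric.isBounded_ball (x := (0 : ℂ)) (r := R)) hg.diffContOnCl (fun ζ hζ => hA ζ ?_) ?_
  · simpa [frontier_ball (0 : ℂ) hR.ne'] using hζ
  · simpa [closure_ball (0 : ℂ) hR.ne'] using hw

/-- `(m + 2) e^{(m+1)/2}` bounds `(1 + ψ') e^ψ` on the circle of radius `√(m+1)`, and
`2m e^{(m+1)/2}` absorbs the negative part of `2ψ' e^ψ` inside it. -/
noncomputable def derivMajorantConst (m : ℕ) : ℝ := (3 * m + 2) * exp ((m + 1) / 2)

section WeightedBound

variable {m : ℕ} {g : ℂ → ℂ} {M : ℝ}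
  (hM : ∀ z : ℂ, ‖g z‖ * exp (-psi m z) / (1 + psi' m ‖z‖) ≤ M)
include hM

lemma nonneg_of_forall_weighted_le : 0 ≤ M := by
  have hnorm : ‖((m + 1 : ℕ) : ℂ)‖ = m + 1 := by
    rw [Complex.norm_natCast]; push_cast; rfl
  have hden := one_le_psi' m (norm_nonneg _) (by rw [hnorm]; nlinarith)
  exact (div_nonneg (by positivity) (by linarith)).trans (hM _)

lemma norm_le_of_weighted_le {w : ℂ} (hw : 0 < 1 + psi' m ‖w‖) :
    ‖g w‖ ≤ M * (1 + psi' m ‖w‖) * exp (psi m w) := by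
  have h := hM w
  rw [div_le_iff₀ hw, exp_neg, ← div_eq_mul_inv, div_le_iff₀ (exp_pos _)] at h
  exact h

lemma norm_le_derivMajorant (hg : Differentiable ℂ g) (w : ℂ) :
    ‖g w‖ ≤ M * (derivMajorantConst m + 2 * psi' m ‖w‖ * exp (psiRadial m ‖w‖)) := by
  have hM0 := nonneg_of_forall_weighted_le hM
  have hR : Real.sqrt (m + 1) ^ 2 = m + 1 := Real.sq_sqrt (by positivity)
  have hR1 : Real.sqrt (m + 1) ≤ m + 1 := by nlinarith [Real.sqrt_nonneg (m + 1 : ℝ)]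
  set R := Real.sqrt (m + 1)
  rcases le_or_gt R ‖w‖ with hw | hw
  · have hp := one_le_psi' m (norm_nonneg w) (by nlinarith [Real.sqrt_nonneg (m + 1 : ℝ)])
    calc ‖g w‖ ≤ M * (1 + psi' m ‖w‖) * exp (psi m w) := norm_le_of_weighted_le hM (by linarith)
      _ ≤ _ := by
        rw [mul_assoc, psi_eq_psiRadial]
        refine mul_le_mul_of_nonneg_left ?_ hM0
        have : 0 ≤ derivMajorantConst m := by unfold derivMajorantConst; positivity
        nlinarith [exp_pos (psiRadial m ‖w‖)]
  · have hsphere : ∀ ζ : ℂ, ‖ζ‖ = R → ‖g ζ‖ ≤ M * ((m + 2) * exp ((m + 1) / 2)) := by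
      intro ζ hζ
      have hp := psi'_le m (norm_nonneg ζ)
      have hp1 := one_le_psi' m (norm_nonneg ζ) (by rw [hζ, hR])
      have hexp : exp (psi m ζ) ≤ exp ((m + 1) / 2) := by
        rw [psi_eq_psiRadial, exp_le_exp, ← hR, ← hζ]
        exact psiRadial_le m (norm_nonneg ζ)
      calc ‖g ζ‖ ≤ M * (1 + psi' m ‖ζ‖) * exp (psi m ζ) :=
            norm_le_of_weighted_le hM (by linarith)
        _ ≤ _ := by
          rw [mul_assoc]
          exact mul_le_mul_of_nonneg_left
            (mul_le_mul (by linarith) hexp (exp_pos _).le (by positivity)) hM0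
    refine (norm_le_of_forall_norm_eq_le hg (by positivity) hsphere hw.le).trans
      (mul_le_mul_of_nonneg_left ?_ hM0)
    have hp := neg_le_psi' m (norm_nonneg w)
    have hexp : exp (psiRadial m ‖w‖) ≤ exp ((m + 1) / 2) := by
      rw [exp_le_exp]
      nlinarith [psiRadial_le m (norm_nonneg w), norm_nonneg w]
    unfold derivMajorantConst
    nlinarith [exp_pos (psiRadial m ‖w‖)]

end WeightedBound

lemma bddAbove_weighted_of_norm_sub_le {E : Type*} [NormedAddCommGroup E] {m : ℕ}
    {f : ℂ → E} {A : ℝ} (h : ∀ z, ‖f z - f 0‖ ≤ A * exp (psi m z)) :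
    BddAbove (range fun z => ‖f z‖ * exp (-psi m z)) := by
  refine ⟨A + ‖f 0‖ * exp (m ^ 2 / 2), ?_⟩
  rintro _ ⟨z, rfl⟩
  have hfz : ‖f z‖ ≤ A * exp (psi m z) + ‖f 0‖ := by linarith [norm_sub_norm_le (f z) (f 0), h z]
  have hexp : exp (-psi m z) ≤ exp (m ^ 2 / 2) := exp_le_exp.2 (neg_psi_le m z)
  calc ‖f z‖ * exp (-psi m z) ≤ (A * exp (psi m z) + ‖f 0‖) * exp (-psi m z) :=
        mul_le_mul_of_nonneg_right hfz (exp_pos _).le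
    _ = A + ‖f 0‖ * exp (-psi m z) := by rw [add_mul, mul_assoc, ← exp_add]; simp
    _ ≤ A + ‖f 0‖ * exp (m ^ 2 / 2) := by gcongr

noncomputable def fockConst (m : ℕ) : ℝ := derivMajorantConst m * exp ((m + 1) ^ 2 / 2) + 2

lemma norm_sub_le_fockConst {m : ℕ} {f : ℂ → ℂ} (hf : Differentiable ℂ f) {M : ℝ}
    (hM : ∀ z : ℂ, ‖deriv f z‖ * exp (-psi m z) / (1 + psi' m ‖z‖) ≤ M) (z : ℂ) :
    ‖f z - f 0‖ ≤ fockConst m * M * exp (psi m z) := by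
  have hM0 := nonneg_of_forall_weighted_le hM
  set K := derivMajorantConst m
  have hG : ∀ s : ℝ, 0 ≤ s → HasDerivAt (fun s => M * (K * s + 2 * exp (psiRadial m s)))
      (M * (K + 2 * psi' m s * exp (psiRadial m s))) s := fun s hs =>
    ((((hasDerivAt_id s).const_mul K).add
      (((hasDerivAt_psiRadial m (by linarith)).exp).const_mul 2)).const_mul M).congr_deriv
      (by ring)
  refine (norm_sub_le_of_norm_deriv_le_radial hf hG
    (norm_le_derivMajorant hM hf.deriv) z).trans ?_
  have hK : K * ‖z‖ ≤ K * (exp ((m + 1) ^ 2 / 2) * exp (psiRadial m ‖z‖)) :=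
    mul_le_mul_of_nonneg_left (le_exp_mul_exp_psiRadial m (norm_nonneg z))
      (by unfold K derivMajorantConst; positivity)
  have h0 : 0 ≤ M * exp (psiRadial m 0) := mul_nonneg hM0 (exp_pos _).le
  rw [psi_eq_psiRadial, fockConst]
  nlinarith [mul_le_mul_of_nonneg_left hK hM0]

/-- If f is entire with M := sup_z |f'(z)|·e^{−ψ_m(z)}/(1+ψ_m'(|z|)) < ∞, then
|f(z) − f(0)| ≤ C·M·e^{ψ_m(z)} with C depending only on m; in particular f ∈ F^∞_{ψ_m}. -/
theorem stmt_2 (m : ℕ) :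
    ∃ C > (0 : ℝ), ∀ f : ℂ → ℂ, Differentiable ℂ f → ∀ M : ℝ,
      (∀ z : ℂ, ‖deriv f z‖ * Real.exp (-psi m z) /
          (1 + psi' m (‖z‖)) ≤ M) →
      (∀ z : ℂ, ‖f z - f 0‖ ≤ C * M * Real.exp (psi m z)) ∧
        BddAbove (Set.range fun z : ℂ => ‖f z‖ * Real.exp (-psi m z)) := by
  refine ⟨fockConst m, by unfold fockConst derivMajorantConst; positivity, fun f hf M hM => ?_⟩
  have h := norm_sub_le_fockConst hf hM
  exact ⟨h, bddAbove_weighted_of_norm_sub_le h⟩
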